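/- Let A be an n×n real matrix, B an n×m real matrix, α > 0, β > 0, q a positive natural number, and 0 < a ≤ ā. Let 0 = ℏ₀ < ℏ₁ < ℏ₂ < … < ℏ_L be real numbers (L ≥ 1) and set Δ = max_{l∈{1,…,L}} (ℏ_l − ℏ_{l−1}). Let V : ℝⁿ → ℝ satisfy a‖x‖∞^q ≤ V(x) ≤ ā‖x‖∞^q for all x ∈ ℝⁿ. Suppose (x_k)_{k∈ℕ} in ℝⁿ and (û_k)_{k∈ℕ} in ℝᵐ satisfy, for every k: ‖û_k‖∞ ≤ β‖x_k‖∞; V(exp(ℏ_l A)·x_k + (∫₀^{ℏ_l} exp(sA) ds)·B·û_k) ≤ e^{−αqℏ_l}·V(x_k) for every l ∈ {1,…,L}; and x_{k+1} = exp(ℏ_L A)·x_k + (∫₀^{ℏ_L} exp(sA) ds)·B·û_k. Define t_k = k·ℏ_L and x : [0,∞) → ℝⁿ by x(t) = exp((t−t_k)A)·x_k + (∫₀^{t−t_k} exp(sA) ds)·B·û_k for t ∈ [t_k, t_{k+1}), k ∈ ℕ. Then for all t ≥ 0, ‖x(t)‖∞ ≤ c·e^{−αt}·‖x_0‖∞,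 where c = (ā/a)^{1/q}·(e^{‖A‖∞ Δ} + β·e^{α(ℏ_L − Δ)}·(∫₀^{Δ} e^{‖A‖∞ s} ds)·‖B‖∞)·e^{αΔ}. -/

import Mathlib

open Matrix
open scoped Nat

attribute [local instance] Matrix.linftyOpNormedAddCommGroup Matrix.linftyOpNormedRing
  Matrix.linftyOpNormedAlgebra

/-- Matrix exponential `exp (t • A)` of a square real matrix. -/
noncomputable def mexp {n : ℕ} (t : ℝ) (A : Matrix (Fin n) (Fin n) ℝ) :
    Matrix (Fin n) (Fin n) ℝ :=
  NormedSpace.exp (t • A)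

/-- Entrywise integral `∫₀ʰ exp (s • A) ds` of the matrix exponential. -/
noncomputable def mint {n : ℕ} (h : ℝ) (A : Matrix (Fin n) (Fin n) ℝ) :
    Matrix (Fin n) (Fin n) ℝ :=
  Matrix.of fun i j => ∫ s in (0:ℝ)..h, mexp s A i j

section Aux


variable {n p r : ℕ}

lemma row_sum_le_norm (M : Matrix (Fin p) (Fin r) ℝ) (i : Fin p) :
    ∑ j, |M i j| ≤ ‖M‖ := by
  rw [Matrix.linfty_opNorm_def]
  have h : (∑ j, ‖M i j‖₊ : NNReal) ≤ Finset.univ.sup fun i => ∑ j, ‖M i j‖₊ :=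
    Finset.le_sup (f := fun i => ∑ j, ‖M i j‖₊) (Finset.mem_univ i)
  calc ∑ j, |M i j| = ((∑ j, ‖M i j‖₊ : NNReal) : ℝ) := by
        push_cast; simp [Real.norm_eq_abs]
    _ ≤ _ := NNReal.coe_le_coe.mpr h

lemma norm_le_of_row_sums (M : Matrix (Fin p) (Fin r) ℝ) (c : ℝ) (hc : 0 ≤ c)
    (h : ∀ i, ∑ j, |M i j| ≤ c) : ‖M‖ ≤ c := by
  rw [Matrix.linfty_opNorm_def, ← Real.coe_toNNReal c hc, NNReal.coe_le_coe]
  refine Finset.sup_le fun i _ => ?_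
  rw [← NNReal.coe_le_coe, Real.coe_toNNReal c hc, NNReal.coe_sum]
  simpa [Real.norm_eq_abs] using h i

lemma entry_abs_le_norm (M : Matrix (Fin p) (Fin r) ℝ) (i : Fin p) (j : Fin r) :
    |M i j| ≤ ‖M‖ :=
  le_trans (Finset.single_le_sum (f := fun j => |M i j|) (fun _ _ => abs_nonneg _)
    (Finset.mem_univ j)) (row_sum_le_norm M i)

lemma matrix_norm_one_le : ‖(1 : Matrix (Fin n) (Fin n) ℝ)‖ ≤ 1 := by
  refine norm_le_of_row_sums _ _ zero_le_one fun i => ?_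
  simp [Matrix.one_apply, apply_ite]

lemma mexp_zero (A : Matrix (Fin n) (Fin n) ℝ) : mexp 0 A = 1 := by
  rw [mexp, zero_smul]; exact NormedSpace.exp_zero

lemma mexp_add (s t : ℝ) (A : Matrix (Fin n) (Fin n) ℝ) :
    mexp (s + t) A = mexp s A * mexp t A := by
  rw [mexp, mexp, mexp, add_smul]
  exact NormedSpace.exp_add_of_commute (((Commute.refl A).smul_left s).smul_right t)

lemma norm_nsexp_le (M : Matrix (Fin n) (Fin n) ℝ) :
    ‖NormedSpace.exp M‖ ≤ Real.exp ‖M‖ := by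
  rw [NormedSpace.exp_eq_tsum ℝ]
  have hs : HasSum (fun k : ℕ => ‖M‖ ^ k / k !) (Real.exp ‖M‖) := by
    have h := (Real.summable_pow_div_factorial ‖M‖).hasSum
    have h2 : Real.exp ‖M‖ = ∑' k : ℕ, ‖M‖ ^ k / k ! := by
      rw [Real.exp_eq_exp_ℝ, NormedSpace.exp_eq_tsum_div]
    rwa [← h2] at h
  refine tsum_of_norm_bounded hs fun k => ?_
  rw [norm_smul, norm_inv, Real.norm_natCast, div_eq_inv_mul]
  refine mul_le_mul_of_nonneg_left ?_ (by positivity)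
  rcases Nat.eq_zero_or_pos k with hk | hk
  · subst hk; rw [pow_zero, pow_zero]; exact matrix_norm_one_le
  · exact norm_pow_le' M hk

lemma norm_mexp_le (A : Matrix (Fin n) (Fin n) ℝ) {t : ℝ} (ht : 0 ≤ t) :
    ‖mexp t A‖ ≤ Real.exp (‖A‖ * t) := by
  calc ‖mexp t A‖ ≤ Real.exp ‖t • A‖ := norm_nsexp_le _
    _ = Real.exp (‖A‖ * t) := by
        rw [norm_smul, Real.norm_eq_abs, abs_of_nonneg ht, mul_comm]

lemma mexp_entry_continuous (A : Matrix (Fin n) (Fin n) ℝ) (i j : Fin n) :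
    Continuous fun s : ℝ => mexp s A i j := by
  have h1 : Continuous fun s : ℝ => mexp s A :=
    NormedSpace.exp_continuous.comp (continuous_id.smul continuous_const)
  have h2 : Continuous fun M : Matrix (Fin n) (Fin n) ℝ => M i j := by
    refine AddMonoidHomClass.continuous_of_bound
      (AddMonoidHom.mk' (fun M : Matrix (Fin n) (Fin n) ℝ => M i j) fun _ _ => rfl) 1
      fun M => ?_
    rw [one_mul]
    exact (Real.norm_eq_abs _).trans_le (entry_abs_le_norm M i j)
  exact h2.comp h1

lemma mexp_ii (A : Matrix (Fin n) (Fin n) ℝ) (a b : ℝ) (i j : Fin n) :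
    IntervalIntegrable (fun s => mexp s A i j) MeasureTheory.volume a b :=
  (mexp_entry_continuous A i j).intervalIntegrable a b

lemma mint_zero (A : Matrix (Fin n) (Fin n) ℝ) : mint 0 A = 0 := by
  ext i j; simp [mint]

lemma mint_split (σ b : ℝ) (A : Matrix (Fin n) (Fin n) ℝ) :
    mint (σ + b) A = mexp σ A * mint b A + mint σ A := by
  ext i j
  have h1 : (∫ s in (0:ℝ)..(σ + b), mexp s A i j)
      = (∫ s in (0:ℝ)..σ, mexp s A i j) + ∫ s in σ..(σ + b), mexp s A i j :=
    (intervalIntegral.integral_add_adjacent_intervals (mexp_ii A 0 σ i j)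
      (mexp_ii A σ (σ + b) i j)).symm
  have h2 : (∫ s in σ..(σ + b), mexp s A i j) = ∫ s in (0:ℝ)..b, mexp (σ + s) A i j := by
    rw [intervalIntegral.integral_comp_add_left (fun s => mexp s A i j) σ, add_zero]
  have h3 : (∫ s in (0:ℝ)..b, mexp (σ + s) A i j)
      = ∑ k, mexp σ A i k * ∫ s in (0:ℝ)..b, mexp s A k j := by
    have e : ∀ s : ℝ, mexp (σ + s) A i j = ∑ k, mexp σ A i k * mexp s A k j := fun s => by
      rw [mexp_add, Matrix.mul_apply]
    rw [intervalIntegral.integral_congr (g := fun s => ∑ k, mexp σ A i k * mexp s A k j)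
      (fun s _ => e s)]
    rw [intervalIntegral.integral_finset_sum (fun k _ => (mexp_ii A 0 b k j).const_mul _)]
    exact Finset.sum_congr rfl fun k _ => intervalIntegral.integral_const_mul _ _
  show (∫ s in (0:ℝ)..(σ + b), mexp s A i j)
      = (mexp σ A * mint b A) i j + ∫ s in (0:ℝ)..σ, mexp s A i j
  rw [h1, h2, h3, Matrix.mul_apply, add_comm]
  rfl

lemma norm_mint_le (A : Matrix (Fin n) (Fin n) ℝ) {h : ℝ} (hh : 0 ≤ h) :
    ‖mint h A‖ ≤ ∫ s in (0:ℝ)..h, Real.exp (‖A‖ * s) := by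
  refine norm_le_of_row_sums _ _
    (intervalIntegral.integral_nonneg hh fun s _ => (Real.exp_pos _).le) fun i => ?_
  have hcont : Continuous fun s : ℝ => ∑ j, |mexp s A i j| := by
    exact continuous_finset_sum _ fun j _ => (mexp_entry_continuous A i j).abs
  calc ∑ j, |mint h A i j| ≤ ∑ j, ∫ s in (0:ℝ)..h, |mexp s A i j| :=
        Finset.sum_le_sum fun j _ =>
          intervalIntegral.abs_integral_le_integral_abs hh
    _ = ∫ s in (0:ℝ)..h, ∑ j, |mexp s A i j| :=
        (intervalIntegral.integral_finset_sum
          (fun j _ => ((mexp_entry_continuous A i j).abs).intervalIntegrable 0 h)).symm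
    _ ≤ ∫ s in (0:ℝ)..h, Real.exp (‖A‖ * s) := by
        refine intervalIntegral.integral_mono_on hh (hcont.intervalIntegrable 0 h)
          ((Real.continuous_exp.comp (continuous_const.mul continuous_id)).intervalIntegrable 0 h)
          fun s hs => ?_
        exact (row_sum_le_norm _ i).trans (norm_mexp_le A hs.1)

lemma root_bound {rr : ℝ} (hr : 0 ≤ rr) {q : ℕ} (hq : 0 < q) {Y Z : ℝ} (hY : 0 ≤ Y)
    (hZ : 0 ≤ Z) (h : Y ^ q ≤ rr * Z ^ q) : Y ≤ rr ^ (1 / (q : ℝ)) * Z := by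
  have hq' : (q : ℝ) ≠ 0 := Nat.cast_ne_zero.mpr hq.ne'
  have h1 : Y = (Y ^ q : ℝ) ^ (1 / (q : ℝ)) := by
    rw [← Real.rpow_natCast Y q, ← Real.rpow_mul hY]
    rw [mul_one_div, div_self hq', Real.rpow_one]
  rw [h1]
  calc (Y ^ q : ℝ) ^ (1 / (q : ℝ)) ≤ (rr * Z ^ q) ^ (1 / (q : ℝ)) :=
        Real.rpow_le_rpow (pow_nonneg hY q) h (by positivity)
    _ = rr ^ (1 / (q : ℝ)) * Z := by
        rw [Real.mul_rpow hr (pow_nonneg hZ q), ← Real.rpow_natCast Z q,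
          ← Real.rpow_mul hZ, mul_one_div, div_self hq', Real.rpow_one]

end Aux

set_option maxHeartbeats 2000000 in
/-- Lemma 2: an extended CLF (decrease at all intermediate times `ℏ₁,…,ℏ_L`) implies GES
with rate `α` and gain depending on `Δ = max_l (ℏ_l − ℏ_{l−1})` rather than on `ℏ_L` alone. -/
theorem eclf_implies_GES {n m : ℕ} (A : Matrix (Fin n) (Fin n) ℝ) (B : Matrix (Fin n) (Fin m) ℝ)
    (α β a abar Δ : ℝ) (q L : ℕ) (ℏ : ℕ → ℝ) (V : (Fin n → ℝ) → ℝ)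
    (hα : 0 < α) (hβ : 0 < β) (hq : 0 < q) (ha : 0 < a) (hab : a ≤ abar) (hL : 1 ≤ L)
    (hℏ0 : ℏ 0 = 0) (hℏmono : ∀ l, l < L → ℏ l < ℏ (l + 1))
    (hΔub : ∀ l, 1 ≤ l → l ≤ L → ℏ l - ℏ (l - 1) ≤ Δ)
    (hΔmem : ∃ l, 1 ≤ l ∧ l ≤ L ∧ Δ = ℏ l - ℏ (l - 1))
    (hVlow : ∀ x : Fin n → ℝ, a * ‖x‖ ^ q ≤ V x)
    (hVup : ∀ x : Fin n → ℝ, V x ≤ abar * ‖x‖ ^ q)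
    (xs : ℕ → Fin n → ℝ) (us : ℕ → Fin m → ℝ)
    (hu : ∀ k, ‖us k‖ ≤ β * ‖xs k‖)
    (hdec : ∀ k, ∀ l, 1 ≤ l → l ≤ L →
      V (mexp (ℏ l) A *ᵥ xs k + mint (ℏ l) A *ᵥ (B *ᵥ us k)) ≤
        Real.exp (-(α * (q : ℝ) * ℏ l)) * V (xs k))
    (hstep : ∀ k, xs (k + 1) = mexp (ℏ L) A *ᵥ xs k + mint (ℏ L) A *ᵥ (B *ᵥ us k))
    (x : ℝ → Fin n → ℝ)
    (hx : ∀ (k : ℕ) (t : ℝ), t ∈ Set.Ico ((k : ℝ) * ℏ L) (((k : ℝ) + 1) * ℏ L) →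
      x t = mexp (t - (k : ℝ) * ℏ L) A *ᵥ xs k + mint (t - (k : ℝ) * ℏ L) A *ᵥ (B *ᵥ us k)) :
    ∀ t : ℝ, 0 ≤ t →
      ‖x t‖ ≤ (abar / a) ^ (1 / (q : ℝ)) *
        (Real.exp (‖A‖ * Δ) + β * Real.exp (α * (ℏ L - Δ)) *
          (∫ s in (0:ℝ)..Δ, Real.exp (‖A‖ * s)) * ‖B‖) *
        Real.exp (α * Δ) * Real.exp (-(α * t)) * ‖xs 0‖ := by
  have hmono : ∀ i d : ℕ, i + d ≤ L → ℏ i ≤ ℏ (i + d) := by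
    intro i d
    induction d with
    | zero => intro _; simp
    | succ d ih =>
      intro hd
      have h1 : i + d ≤ L := by omega
      have h2 := hℏmono (i + d) (by omega)
      calc ℏ i ≤ ℏ (i + d) := ih h1
        _ ≤ ℏ (i + d + 1) := h2.le
  have hle : ∀ i j : ℕ, i ≤ j → j ≤ L → ℏ i ≤ ℏ j := by
    intro i j hij hjL
    have h := hmono i (j - i) (by omega)
    rwa [Nat.add_sub_cancel' hij] at h
  have hLpos : 0 < ℏ L := by
    have h1 := hℏmono 0 (by omega)
    have h2 := hle 1 L hL le_rfl
    rw [hℏ0] at h1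
    linarith
  have hΔpos : 0 < Δ := by
    obtain ⟨l, hl1, hlL, hΔeq⟩ := hΔmem
    have h := hℏmono (l - 1) (by omega)
    rw [show l - 1 + 1 = l by omega] at h
    rw [hΔeq]; linarith
  set c₁ := (abar / a) ^ (1 / (q : ℝ)) with hc₁
  clear_value c₁
  have hc₁1 : (1:ℝ) ≤ c₁ := by
    have h1 : (1:ℝ) ≤ abar / a := (one_le_div ha).mpr hab
    calc (1:ℝ) = 1 ^ (1 / (q:ℝ)) := (Real.one_rpow _).symm
      _ ≤ c₁ := by rw [hc₁]; exact Real.rpow_le_rpow zero_le_one h1 (by positivity)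
  have hc₁0 : (0:ℝ) ≤ c₁ := le_trans zero_le_one hc₁1
  have key : ∀ (z w : Fin n → ℝ) (h : ℝ), V z ≤ Real.exp (-(α * (q:ℝ) * h)) * V w →
      ‖z‖ ≤ c₁ * (Real.exp (-(α * h)) * ‖w‖) := by
    intro z w h hzw
    have e : Real.exp (-(α * h)) ^ q = Real.exp (-(α * (q:ℝ) * h)) := by
      rw [← Real.exp_nat_mul]; ring_nf
    have h1 : a * ‖z‖ ^ q ≤ Real.exp (-(α * (q:ℝ) * h)) * (abar * ‖w‖ ^ q) :=
      (hVlow z).trans (hzw.trans (mul_le_mul_of_nonneg_left (hVup w) (Real.exp_pos _).le))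
    have h2 : ‖z‖ ^ q ≤ (abar / a) * (Real.exp (-(α * h)) * ‖w‖) ^ q := by
      rw [mul_pow, e, div_mul_eq_mul_div, le_div_iff₀ ha]
      nlinarith [h1]
    rw [hc₁]
    exact root_bound (div_nonneg (ha.le.trans hab) ha.le) hq (norm_nonneg z)
      (by positivity) h2
  have hVk : ∀ k : ℕ, V (xs k) ≤ Real.exp (-(α * (q:ℝ) * ((k:ℝ) * ℏ L))) * V (xs 0) := by
    intro k
    induction k with
    | zero => simp
    | succ k ih =>
      have h1 := hdec k L hL le_rfl
      rw [← hstep k] at h1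
      calc V (xs (k+1)) ≤ Real.exp (-(α * (q:ℝ) * ℏ L)) * V (xs k) := h1
        _ ≤ Real.exp (-(α * (q:ℝ) * ℏ L)) *
            (Real.exp (-(α * (q:ℝ) * ((k:ℝ) * ℏ L))) * V (xs 0)) :=
          mul_le_mul_of_nonneg_left ih (Real.exp_pos _).le
        _ = Real.exp (-(α * (q:ℝ) * (((k:ℕ) + 1 : ℕ) * ℏ L))) * V (xs 0) := by
          rw [← mul_assoc, ← Real.exp_add]
          congr 2
          push_cast
          ring
  intro t ht
  set K := ⌊t / ℏ L⌋₊ with hKdef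
  clear_value K
  have hk1 : (K:ℝ) * ℏ L ≤ t := by
    have h1 := Nat.floor_le (div_nonneg ht hLpos.le)
    have h2 : (⌊t / ℏ L⌋₊ : ℝ) * ℏ L ≤ t / ℏ L * ℏ L :=
      mul_le_mul_of_nonneg_right h1 hLpos.le
    rw [div_mul_cancel₀ t hLpos.ne'] at h2
    rw [hKdef]; exact h2
  have hk2 : t < ((K:ℝ) + 1) * ℏ L := by
    have h1 := Nat.lt_floor_add_one (t / ℏ L)
    have h2 : t / ℏ L * ℏ L < ((⌊t / ℏ L⌋₊ : ℝ) + 1) * ℏ L :=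
      mul_lt_mul_of_pos_right h1 hLpos
    rw [div_mul_cancel₀ t hLpos.ne'] at h2
    rw [hKdef]; exact h2
  set τ := t - (K:ℝ) * ℏ L with hτdef
  clear_value τ
  have hτ0 : 0 ≤ τ := by rw [hτdef]; linarith
  have hτL : τ < ℏ L := by
    rw [add_mul, one_mul] at hk2
    rw [hτdef]; linarith
  have hfind : ∀ l : ℕ, l ≤ L → τ < ℏ l →
      ∃ j : ℕ, 1 ≤ j ∧ j ≤ L ∧ ℏ (j - 1) ≤ τ ∧ τ < ℏ j := by
    intro l
    induction l with
    | zero => intro _ h; rw [hℏ0] at h; linarith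
    | succ l ih =>
      intro hlL hτl
      rcases le_or_gt (ℏ l) τ with h | h
      · exact ⟨l + 1, by omega, hlL, by simpa using h, hτl⟩
      · exact ih (by omega) h
  obtain ⟨l, hl1, hlL, hτl, hτu⟩ := hfind L le_rfl hτL
  set σ := τ - ℏ (l - 1) with hσdef
  clear_value σ
  have hσ0 : 0 ≤ σ := by rw [hσdef]; linarith
  have hσΔ : σ ≤ Δ := by
    have h := hΔub l hl1 hlL
    rw [hσdef]; linarith
  have hsum_lt : ℏ (l - 1) + σ < ℏ L := by
    have h := hle l L hlL le_rfl
    rw [hσdef]; linarith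
  have ht_eq : t = (K:ℝ) * ℏ L + ℏ (l - 1) + σ := by
    rw [hσdef, hτdef]; ring
  set w := B *ᵥ us K with hw
  clear_value w
  set z := mexp (ℏ (l - 1)) A *ᵥ xs K + mint (ℏ (l - 1)) A *ᵥ w with hz
  clear_value z
  have hxt : x t = mexp σ A *ᵥ z + mint σ A *ᵥ w := by
    have h0 := hx K t ⟨hk1, hk2⟩
    have hτeq : t - (K:ℝ) * ℏ L = σ + ℏ (l - 1) := by rw [hσdef, hτdef]; ring
    rw [hτeq, mexp_add, mint_split] at h0
    rw [h0, hz, hw]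
    simp only [Matrix.add_mulVec, Matrix.mulVec_add, ← Matrix.mulVec_mulVec]
    abel
  have hVz : V z ≤ Real.exp (-(α * (q:ℝ) * ((K:ℝ) * ℏ L + ℏ (l - 1)))) * V (xs 0) := by
    by_cases hl : l = 1
    · have hz' : z = xs K := by
        rw [hz, hl]
        simp [hℏ0, mexp_zero, mint_zero, Matrix.one_mulVec, Matrix.zero_mulVec]
      rw [hz', hl]
      simpa [hℏ0] using hVk K
    · have h2 : 1 ≤ l - 1 := by omega
      have h3 := hdec K (l - 1) h2 (by omega)
      rw [← hw, ← hz] at h3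
      calc V z ≤ Real.exp (-(α * (q:ℝ) * ℏ (l - 1))) * V (xs K) := h3
        _ ≤ Real.exp (-(α * (q:ℝ) * ℏ (l - 1))) *
            (Real.exp (-(α * (q:ℝ) * ((K:ℝ) * ℏ L))) * V (xs 0)) :=
          mul_le_mul_of_nonneg_left (hVk K) (Real.exp_pos _).le
        _ = _ := by
          rw [← mul_assoc, ← Real.exp_add]
          congr 2
          ring
  have hznorm : ‖z‖ ≤ c₁ * (Real.exp (-(α * ((K:ℝ) * ℏ L + ℏ (l - 1)))) * ‖xs 0‖) :=
    key z (xs 0) _ hVz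
  have hxknorm : ‖xs K‖ ≤ c₁ * (Real.exp (-(α * ((K:ℝ) * ℏ L))) * ‖xs 0‖) :=
    key (xs K) (xs 0) _ (hVk K)
  have hwnorm : ‖w‖ ≤ ‖B‖ * (β * (c₁ * (Real.exp (-(α * ((K:ℝ) * ℏ L))) * ‖xs 0‖))) := by
    rw [hw]
    calc ‖B *ᵥ us K‖ ≤ ‖B‖ * ‖us K‖ := Matrix.linfty_opNorm_mulVec B (us K)
      _ ≤ ‖B‖ * (β * ‖xs K‖) := mul_le_mul_of_nonneg_left (hu K) (norm_nonneg B)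
      _ ≤ _ := mul_le_mul_of_nonneg_left
          (mul_le_mul_of_nonneg_left hxknorm hβ.le) (norm_nonneg B)
  set Iσ := ∫ s in (0:ℝ)..σ, Real.exp (‖A‖ * s) with hIσ
  clear_value Iσ
  set IΔ := ∫ s in (0:ℝ)..Δ, Real.exp (‖A‖ * s) with hIΔ
  clear_value IΔ
  have hIσ0 : 0 ≤ Iσ := by
    rw [hIσ]
    exact intervalIntegral.integral_nonneg hσ0 fun s _ => (Real.exp_pos _).le
  have hIΔ0 : 0 ≤ IΔ := by
    rw [hIΔ]
    exact intervalIntegral.integral_nonneg hΔpos.le fun s _ => (Real.exp_pos _).le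
  have hIle : Iσ ≤ IΔ := by
    rw [hIσ, hIΔ]
    refine intervalIntegral.integral_mono_interval le_rfl hσ0 hσΔ ?_ ?_
    · filter_upwards with s using (Real.exp_pos _).le
    · exact (Real.continuous_exp.comp (continuous_const.mul continuous_id)).intervalIntegrable 0 Δ
  have hms : ‖mint σ A‖ ≤ Iσ := by rw [hIσ]; exact norm_mint_le A hσ0
  have hxb : ‖x t‖ ≤
      Real.exp (‖A‖ * σ) * (c₁ * (Real.exp (-(α * ((K:ℝ) * ℏ L + ℏ (l - 1)))) * ‖xs 0‖))
      + Iσ * (‖B‖ * (β * (c₁ * (Real.exp (-(α * ((K:ℝ) * ℏ L))) * ‖xs 0‖)))) := by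
    rw [hxt]
    calc ‖mexp σ A *ᵥ z + mint σ A *ᵥ w‖
        ≤ ‖mexp σ A *ᵥ z‖ + ‖mint σ A *ᵥ w‖ := norm_add_le _ _
      _ ≤ ‖mexp σ A‖ * ‖z‖ + ‖mint σ A‖ * ‖w‖ :=
        add_le_add (Matrix.linfty_opNorm_mulVec _ _) (Matrix.linfty_opNorm_mulVec _ _)
      _ ≤ _ :=
        add_le_add
          (mul_le_mul (norm_mexp_le A hσ0) hznorm (norm_nonneg _) (Real.exp_pos _).le)
          (mul_le_mul hms hwnorm (norm_nonneg _) hIσ0)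
  have hT1 : Real.exp (‖A‖ * σ) *
        (c₁ * (Real.exp (-(α * ((K:ℝ) * ℏ L + ℏ (l - 1)))) * ‖xs 0‖))
      ≤ c₁ * Real.exp (‖A‖ * Δ) * Real.exp (α * Δ) * Real.exp (-(α * t)) * ‖xs 0‖ := by
    have e1 : Real.exp (‖A‖ * σ) * Real.exp (-(α * ((K:ℝ) * ℏ L + ℏ (l - 1))))
        ≤ Real.exp (‖A‖ * Δ) * (Real.exp (α * Δ) * Real.exp (-(α * t))) := by
      rw [← Real.exp_add, ← Real.exp_add, ← Real.exp_add]
      refine Real.exp_le_exp.mpr ?_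
      rw [ht_eq]
      nlinarith [mul_nonneg (norm_nonneg A) (sub_nonneg.mpr hσΔ),
        mul_nonneg hα.le (sub_nonneg.mpr hσΔ)]
    calc Real.exp (‖A‖ * σ) *
          (c₁ * (Real.exp (-(α * ((K:ℝ) * ℏ L + ℏ (l - 1)))) * ‖xs 0‖))
        = (Real.exp (‖A‖ * σ) * Real.exp (-(α * ((K:ℝ) * ℏ L + ℏ (l - 1)))))
            * (c₁ * ‖xs 0‖) := by ring
      _ ≤ (Real.exp (‖A‖ * Δ) * (Real.exp (α * Δ) * Real.exp (-(α * t))))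
            * (c₁ * ‖xs 0‖) := mul_le_mul_of_nonneg_right e1 (by positivity)
      _ = _ := by ring
  have hT2 : Iσ * (‖B‖ * (β * (c₁ * (Real.exp (-(α * ((K:ℝ) * ℏ L))) * ‖xs 0‖))))
      ≤ c₁ * (β * Real.exp (α * (ℏ L - Δ)) * IΔ * ‖B‖) * Real.exp (α * Δ) *
          Real.exp (-(α * t)) * ‖xs 0‖ := by
    have e2 : Iσ * Real.exp (-(α * ((K:ℝ) * ℏ L)))
        ≤ IΔ * (Real.exp (α * (ℏ L - Δ)) * (Real.exp (α * Δ) * Real.exp (-(α * t)))) := by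
      rw [← Real.exp_add, ← Real.exp_add]
      refine mul_le_mul hIle (Real.exp_le_exp.mpr ?_) (Real.exp_pos _).le hIΔ0
      rw [ht_eq]
      nlinarith [mul_nonneg hα.le (sub_nonneg.mpr hsum_lt.le)]
    calc Iσ * (‖B‖ * (β * (c₁ * (Real.exp (-(α * ((K:ℝ) * ℏ L))) * ‖xs 0‖))))
        = (Iσ * Real.exp (-(α * ((K:ℝ) * ℏ L)))) * (‖B‖ * β * c₁ * ‖xs 0‖) := by ring
      _ ≤ (IΔ * (Real.exp (α * (ℏ L - Δ)) * (Real.exp (α * Δ) * Real.exp (-(α * t)))))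
            * (‖B‖ * β * c₁ * ‖xs 0‖) := mul_le_mul_of_nonneg_right e2 (by positivity)
      _ = _ := by ring
  calc ‖x t‖ ≤ _ := hxb
    _ ≤ c₁ * Real.exp (‖A‖ * Δ) * Real.exp (α * Δ) * Real.exp (-(α * t)) * ‖xs 0‖
        + c₁ * (β * Real.exp (α * (ℏ L - Δ)) * IΔ * ‖B‖) * Real.exp (α * Δ) *
          Real.exp (-(α * t)) * ‖xs 0‖ := add_le_add hT1 hT2
    _ = c₁ * (Real.exp (‖A‖ * Δ) + β * Real.exp (α * (ℏ L - Δ)) * IΔ * ‖B‖) *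
          Real.exp (α * Δ) * Real.exp (-(α * t)) * ‖xs 0‖ := by ring
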